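/- arXiv:1212.0048 — 2 statements merged into one kernel-verified Lean document; each statement's English description precedes it below -/
import Mathlib

section
/- There is a unique real number β ∈ (0,1) satisfying 1/p^β + 1/q^β = 1, and for this β one has W(U) ≤ U^β for every integer U ≥ 1. -/
/-- A strictly chained `(p,q)`-ary partition of `U`: a finite strictly decreasing
list of positive integers of the form `p^a * q^b`, each part divisible by the next,
summing to `U`. -/
def IsSCPartition (p q U : ℕ) (l : List ℕ) : Prop :=
  (∀ x ∈ l, ∃ a b : ℕ, x = p ^ a * q ^ b) ∧
  List.Chain' (fun x y => y ∣ x ∧ y < x) l ∧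
  l.sum = U

/-- The set of strictly chained `(p,q)`-ary partitions of `U`. -/
def Omega (p q U : ℕ) : Set (List ℕ) := {l | IsSCPartition p q U l}

/-- The subset of `Omega p q U` of partitions with no part equal to `1`. -/
def OmegaStar (p q U : ℕ) : Set (List ℕ) := {l | IsSCPartition p q U l ∧ 1 ∉ l}

/-- `W p q U` is the number of strictly chained `(p,q)`-ary partitions of `U`. -/
noncomputable def W (p q U : ℕ) : ℕ := (Omega p q U).ncard

/-- `Wstar p q U` is the number of strictly chained `(p,q)`-ary partitions of `U`
with no part equal to `1`. -/
noncomputable def Wstar (p q U : ℕ) : ℕ := (OmegaStar p q U).ncard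

/-!
Deleting the part `1` (necessarily the last one) gives `W(U) ≤ W*(U) + W*(U - 1)`. In a
partition without part `1`, the last part `p^a q^b ≠ 1` divides every part and is divisible by
`p` or by `q`; dividing all parts by that prime gives
`W*(V) ≤ [p ∣ V] W(V/p) + [q ∣ V] W(V/q)`, coprimality keeping the quotients of the form
`p^a q^b`. As `p` divides at most one of `U` and
`U - 1`, strong induction gives `W(U) ≤ (U/p)^β + (U/q)^β = U^β`.
-/

section

variable {p q U : ℕ} {l : List ℕ}

theorem List.map_mul_map_div {l : List ℕ} {r : ℕ} (h : ∀ x ∈ l, r ∣ x) :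
    (l.map (· / r)).map (r * ·) = l := by
  rw [List.map_map]
  exact (List.map_congr_left fun x hx => Nat.mul_div_cancel' (h x hx)).trans (List.map_id _)

namespace IsSCPartition

theorem pairwise (h : IsSCPartition p q U l) : l.Pairwise fun x y => y ∣ x ∧ y < x :=
  letI : Trans (fun x y : ℕ => y ∣ x ∧ y < x) (fun x y => y ∣ x ∧ y < x)
      (fun x y => y ∣ x ∧ y < x) :=
    ⟨fun h₁ h₂ => ⟨h₂.1.trans h₁.1, h₂.2.trans h₁.2⟩⟩
  List.isChain_iff_pairwise.mp h.2.1

theorem pairwise_gt (h : IsSCPartition p q U l) : l.Pairwise (· > ·) :=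
  h.pairwise.imp (·.2)

theorem getLast_dvd (h : IsSCPartition p q U l) {x : ℕ} (hx : x ∈ l) :
    l.getLast (List.ne_nil_of_mem hx) ∣ x :=
  (h.pairwise.imp (S := fun x y => y ∣ x) (·.1)).rel_getLast_of_rel_getLast_getLast hx dvd_rfl

theorem pos_of_mem (hp : 0 < p) (hq : 0 < q) (h : IsSCPartition p q U l) {x : ℕ}
    (hx : x ∈ l) : 0 < x := by
  obtain ⟨a, b, rfl⟩ := h.1 x hx
  positivity

theorem eq_nil (hp : 0 < p) (hq : 0 < q) (h : IsSCPartition p q 0 l) : l = [] :=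
  List.eq_nil_iff_forall_not_mem.mpr fun x hx =>
    (h.pos_of_mem hp hq hx).ne' (List.sum_eq_zero_iff.mp h.2.2 x hx)

theorem getLast_eq_one (h : IsSCPartition p q U l) (h1 : 1 ∈ l) :
    l.getLast (List.ne_nil_of_mem h1) = 1 :=
  Nat.dvd_one.mp (h.getLast_dvd h1)

theorem dropLast_append_one (h : IsSCPartition p q U l) (h1 : 1 ∈ l) :
    l.dropLast ++ [1] = l :=
  h.getLast_eq_one h1 ▸ List.dropLast_append_getLast _

theorem dropLast_mem_OmegaStar (h : IsSCPartition p q U l) (h1 : 1 ∈ l) :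
    l.dropLast ∈ OmegaStar p q (U - 1) := by
  have hsum : l.dropLast.sum + 1 = U := by
    simpa [← h.2.2] using congrArg List.sum (h.dropLast_append_one h1)
  refine ⟨⟨fun x hx => h.1 x (List.dropLast_subset _ hx), h.2.1.dropLast, by omega⟩,
    fun h1' => ?_⟩
  have := h.pairwise_gt.rel_dropLast_getLast h1'
  rw [h.getLast_eq_one h1] at this
  exact lt_irrefl 1 this

theorem comm (h : IsSCPartition p q U l) : IsSCPartition q p U l :=
  ⟨fun x hx => by obtain ⟨a, b, rfl⟩ := h.1 x hx; exact ⟨b, a, mul_comm _ _⟩, h.2⟩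

theorem of_map_mul (hp : 1 < p) (hpq : Nat.Coprime p q)
    (h : IsSCPartition p q (p * U) (l.map (p * ·))) : IsSCPartition p q U l := by
  have hp0 : 0 < p := by omega
  refine ⟨fun x hx => ?_, ?_, ?_⟩
  · obtain ⟨a, b, hab⟩ := h.1 (p * x) (List.mem_map_of_mem hx)
    cases a with
    | zero =>
      have : p ∣ q ^ b := ⟨x, by simpa using hab.symm⟩
      exact absurd ((hpq.pow_right b).eq_one_of_dvd this) hp.ne'
    | succ a =>
      exact ⟨a, b, Nat.eq_of_mul_eq_mul_left hp0 (by rw [hab, pow_succ']; ring)⟩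
  · exact (List.isChain_map _).mp h.2.1 |>.imp fun _ _ hxy =>
      ⟨Nat.dvd_of_mul_dvd_mul_left hp0 hxy.1, Nat.lt_of_mul_lt_mul_left hxy.2⟩
  · have := h.2.2
    rw [List.sum_map_mul_left (f := fun x => x), List.map_id'] at this
    exact Nat.eq_of_mul_eq_mul_left hp0 this

theorem dvd_all_or_dvd_all (h : IsSCPartition p q U l) (hl : l ≠ []) (h1 : 1 ∉ l) :
    (∀ x ∈ l, p ∣ x) ∨ (∀ x ∈ l, q ∣ x) := by
  have hlast := List.getLast_mem hl
  obtain ⟨a, b, hab⟩ := h.1 _ hlast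
  have hdvd {r : ℕ} (hr : r ∣ l.getLast hl) : ∀ x ∈ l, r ∣ x := fun x hx =>
    hr.trans (h.getLast_dvd hx)
  rcases a with _ | a
  · rcases b with _ | b
    · exact absurd (by simpa [hab] using hlast) h1
    · refine Or.inr (hdvd ?_)
      rw [hab, pow_succ']
      exact dvd_mul_of_dvd_right (dvd_mul_right _ _) _
  · refine Or.inl (hdvd ?_)
    rw [hab, pow_succ']
    exact dvd_mul_of_dvd_left (dvd_mul_right _ _) _

end IsSCPartition

theorem finite_Omega (p q U : ℕ) : (Omega p q U).Finite := by
  refine Set.Finite.of_finite_image (f := List.toFinset) ?_ fun l₁ h₁ l₂ h₂ he =>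
    h₁.pairwise_gt.eq_of_mem_iff h₂.pairwise_gt fun x => by
      rw [← List.mem_toFinset, he, List.mem_toFinset]
  refine (Finset.range (U + 1)).powerset.finite_toSet.subset ?_
  rintro _ ⟨l, hl, rfl⟩
  refine Finset.mem_coe.mpr (Finset.mem_powerset.mpr fun x hx => ?_)
  exact Finset.mem_range_succ_iff.mpr (hl.2.2 ▸ List.le_sum_of_mem (List.mem_toFinset.mp hx))

theorem finite_OmegaStar (p q U : ℕ) : (OmegaStar p q U).Finite :=
  (finite_Omega p q U).subset fun _ hl => hl.1

theorem Wstar_le_W (p q U : ℕ) : Wstar p q U ≤ W p q U :=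
  Set.ncard_le_ncard (fun _ hl => hl.1) (finite_Omega p q U)

theorem Omega_comm (p q U : ℕ) : Omega p q U = Omega q p U :=
  Set.ext fun _ => ⟨IsSCPartition.comm, IsSCPartition.comm⟩

theorem W_comm (p q U : ℕ) : W p q U = W q p U := by
  rw [W, W, Omega_comm]

theorem W_zero_le (hp : 0 < p) (hq : 0 < q) : W p q 0 ≤ 1 :=
  (Set.ncard_le_ncard (t := {[]}) (fun _ hl => hl.eq_nil hp hq)).trans
    (Set.ncard_singleton _).le

theorem W_le_Wstar_add_Wstar (p q U : ℕ) : W p q U ≤ Wstar p q U + Wstar p q (U - 1) := by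
  let withOne : Set (List ℕ) := {l ∈ Omega p q U | 1 ∈ l}
  have hsplit : Omega p q U ⊆ OmegaStar p q U ∪ withOne := fun l hl =>
    (em (1 ∈ l)).symm.imp (⟨hl, ·⟩) (⟨hl, ·⟩)
  have hwithOne : withOne.ncard ≤ Wstar p q (U - 1) :=
    Set.ncard_le_ncard_of_injOn List.dropLast (fun l hl => hl.1.dropLast_mem_OmegaStar hl.2)
      (fun l₁ h₁ l₂ h₂ he => by
        rw [← h₁.1.dropLast_append_one h₁.2, ← h₂.1.dropLast_append_one h₂.2, he])
      (finite_OmegaStar p q (U - 1))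
  calc W p q U ≤ (OmegaStar p q U ∪ withOne).ncard :=
        Set.ncard_le_ncard hsplit ((finite_OmegaStar p q U).union ((finite_Omega p q U).sep _))
    _ ≤ Wstar p q U + withOne.ncard := Set.ncard_union_le _ _
    _ ≤ Wstar p q U + Wstar p q (U - 1) := Nat.add_le_add_left hwithOne _

noncomputable def Wdiv (p q r V : ℕ) : ℕ := if r ∣ V then W p q (V / r) else 0

theorem ncard_setOf_dvd_le (hp : 1 < p) (hpq : Nat.Coprime p q) (V : ℕ) :
    {l ∈ Omega p q V | ∀ x ∈ l, p ∣ x}.ncard ≤ Wdiv p q p V := by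
  unfold Wdiv
  split_ifs with hV
  · refine Set.ncard_le_ncard_of_injOn (List.map (· / p)) ?_ ?_ (finite_Omega p q (V / p))
    · intro l hl
      refine IsSCPartition.of_map_mul hp hpq ?_
      rw [List.map_mul_map_div hl.2, Nat.mul_div_cancel' hV]
      exact hl.1
    · intro l₁ h₁ l₂ h₂ he
      rw [← List.map_mul_map_div h₁.2, ← List.map_mul_map_div h₂.2, he]
  · have hempty : {l ∈ Omega p q V | ∀ x ∈ l, p ∣ x} = ∅ :=
      Set.eq_empty_of_forall_notMem fun l hl => hV (hl.1.2.2 ▸ List.dvd_sum hl.2)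
    rw [hempty, Set.ncard_empty]

theorem Wstar_le (hp : 1 < p) (hq : 1 < q) (hpq : Nat.Coprime p q) {V : ℕ} (hV : 1 ≤ V) :
    Wstar p q V ≤ Wdiv p q p V + Wdiv p q q V := by
  have hcover : OmegaStar p q V ⊆
      {l ∈ Omega p q V | ∀ x ∈ l, p ∣ x} ∪
        {l ∈ Omega p q V | ∀ x ∈ l, q ∣ x} := by
    rintro l ⟨hl, h1⟩
    have hne : l ≠ [] := by
      rintro rfl
      have : V = 0 := hl.2.2.symm
      omega
    exact (hl.dvd_all_or_dvd_all hne h1).imp (⟨hl, ·⟩) (⟨hl, ·⟩)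
  calc Wstar p q V ≤ _ :=
        Set.ncard_le_ncard hcover (((finite_Omega p q V).sep _).union ((finite_Omega p q V).sep _))
    _ ≤ _ := Set.ncard_union_le _ _
    _ ≤ _ := Nat.add_le_add (ncard_setOf_dvd_le hp hpq V)
        (by simpa only [Wdiv, Omega_comm q p, W_comm q p] using ncard_setOf_dvd_le hq hpq.symm V)

theorem strictAnti_one_div_rpow {a : ℝ} (ha : 1 < a) : StrictAnti fun x : ℝ => 1 / a ^ x :=
  fun _ _ hxy => one_div_lt_one_div_of_lt (by positivity) (Real.rpow_lt_rpow_of_exponent_lt ha hxy)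

theorem existsUnique_one_div_rpow_add_one_div_rpow_eq_one {a b : ℝ} (ha : 1 < a) (hb : 1 < b)
    (hab : 1 / a + 1 / b < 1) :
    ∃! β : ℝ, β ∈ Set.Ioo (0 : ℝ) 1 ∧ 1 / a ^ β + 1 / b ^ β = 1 := by
  have hanti := (strictAnti_one_div_rpow ha).add (strictAnti_one_div_rpow hb)
  have hcont : Continuous fun x : ℝ => 1 / a ^ x + 1 / b ^ x := by
    fun_prop (disch := intro; positivity)
  obtain ⟨β, hβ, hβeq⟩ := intermediate_value_Ioo' zero_le_one hcont.continuousOn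
    ⟨by simpa using hab, by norm_num⟩
  exact ⟨β, ⟨hβ, hβeq⟩, fun γ hγ => hanti.injective (hγ.2.trans hβeq.symm)⟩

theorem one_div_add_one_div_lt_one {p q : ℕ} (hp : 1 < p) (hq : 1 < q) (hpq : p ≠ q) :
    1 / (p : ℝ) + 1 / q < 1 := by
  have hlt : p + q < p * q := by
    rcases Nat.lt_or_gt_of_ne hpq with h | h <;> nlinarith
  rw [div_add_div _ _ (by positivity) (by positivity), div_lt_one (by positivity)]
  exact_mod_cast (by linarith : 1 * q + p * 1 < p * q)

theorem W_one_le (hp : 1 < p) (hq : 1 < q) (hpq : Nat.Coprime p q) : W p q 1 ≤ 1 := by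
  have hWstar1 : Wstar p q 1 = 0 := by
    simpa [Wdiv, Nat.dvd_one, hp.ne', hq.ne'] using Wstar_le hp hq hpq le_rfl
  have hWstar0 : Wstar p q (1 - 1) ≤ 1 :=
    (Wstar_le_W p q 0).trans (W_zero_le (by omega) (by omega))
  have := W_le_Wstar_add_Wstar p q 1
  omega

theorem W_div_le_rpow {β : ℝ} (hβ : 0 ≤ β) {U V r : ℕ}
    (IH : ∀ k < U, 1 ≤ k → (W p q k : ℝ) ≤ (k : ℝ) ^ β)
    (hr : 1 < r) (hV : 1 ≤ V) (hVU : V ≤ U) (hrV : r ∣ V) :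
    (W p q (V / r) : ℝ) ≤ (U : ℝ) ^ β / (r : ℝ) ^ β := by
  have hk : 1 ≤ V / r := Nat.div_pos (Nat.le_of_dvd hV hrV) (by omega)
  have hkU : V / r < U := (Nat.div_lt_self hV hr).trans_le hVU
  calc (W p q (V / r) : ℝ) ≤ ((V / r : ℕ) : ℝ) ^ β := IH _ hkU hk
    _ ≤ ((U : ℝ) / r) ^ β := by
        gcongr
        exact Nat.cast_div_le.trans (by gcongr)
    _ = (U : ℝ) ^ β / (r : ℝ) ^ β := Real.div_rpow (by positivity) (by positivity) β

theorem Wdiv_add_Wdiv_le_rpow {β : ℝ} (hβ : 0 ≤ β) {U r : ℕ}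
    (IH : ∀ k < U, 1 ≤ k → (W p q k : ℝ) ≤ (k : ℝ) ^ β) (hr : 1 < r) (hU : 2 ≤ U) :
    ((Wdiv p q r U + Wdiv p q r (U - 1) : ℕ) : ℝ) ≤ (U : ℝ) ^ β / (r : ℝ) ^ β := by
  have hcoprime : ¬ (r ∣ U ∧ r ∣ U - 1) := fun ⟨h₁, h₂⟩ => by
    have := Nat.dvd_sub h₁ h₂
    rw [show U - (U - 1) = 1 by omega, Nat.dvd_one] at this
    omega
  unfold Wdiv
  split_ifs with h₁ h₂ h₂
  · exact absurd ⟨h₁, h₂⟩ hcoprime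
  · simpa using W_div_le_rpow hβ IH hr (by omega) le_rfl h₁
  · simpa using W_div_le_rpow hβ IH hr (by omega) (by omega) h₂
  · simp only [add_zero, Nat.cast_zero]
    positivity

theorem W_le_rpow (hp : 1 < p) (hq : 1 < q) (hpq : Nat.Coprime p q) {β : ℝ} (hβ : 0 ≤ β)
    (heq : 1 / (p : ℝ) ^ β + 1 / (q : ℝ) ^ β = 1) :
    ∀ U, 1 ≤ U → (W p q U : ℝ) ≤ (U : ℝ) ^ β := by
  intro U
  induction U using Nat.strong_induction_on with
  | _ U IH =>
  intro hU
  rcases hU.eq_or_lt with rfl | hU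
  · simpa using (Nat.cast_le (α := ℝ)).mpr (W_one_le hp hq hpq)
  · have hWdiv : W p q U ≤
        (Wdiv p q p U + Wdiv p q p (U - 1)) + (Wdiv p q q U + Wdiv p q q (U - 1)) := by
      have := W_le_Wstar_add_Wstar p q U
      have := Wstar_le hp hq hpq (V := U) (by omega)
      have := Wstar_le hp hq hpq (V := U - 1) (by omega)
      omega
    calc (W p q U : ℝ) ≤ ((Wdiv p q p U + Wdiv p q p (U - 1) : ℕ) : ℝ) +
          ((Wdiv p q q U + Wdiv p q q (U - 1) : ℕ) : ℝ) := by exact_mod_cast hWdiv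
      _ ≤ (U : ℝ) ^ β / (p : ℝ) ^ β + (U : ℝ) ^ β / (q : ℝ) ^ β :=
          add_le_add (Wdiv_add_Wdiv_le_rpow hβ IH hp hU)
            (Wdiv_add_Wdiv_le_rpow hβ IH hq hU)
      _ = (U : ℝ) ^ β := by linear_combination (U : ℝ) ^ β * heq

end

theorem W_upper_bound (p q : ℕ) (hp : 1 < p) (hq : 1 < q) (hpq : Nat.Coprime p q) :
    (∃! β : ℝ, β ∈ Set.Ioo (0 : ℝ) 1 ∧
      1 / (p : ℝ) ^ β + 1 / (q : ℝ) ^ β = 1) ∧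
    ∀ β : ℝ, β ∈ Set.Ioo (0 : ℝ) 1 → 1 / (p : ℝ) ^ β + 1 / (q : ℝ) ^ β = 1 →
      ∀ U : ℕ, 1 ≤ U → (W p q U : ℝ) ≤ (U : ℝ) ^ β := by
  have hne : p ≠ q := fun h => by
    subst h
    exact hp.ne' (hpq.eq_one_of_dvd dvd_rfl)
  exact ⟨existsUnique_one_div_rpow_add_one_div_rpow_eq_one (by exact_mod_cast hp)
      (by exact_mod_cast hq) (one_div_add_one_div_lt_one hp hq hne),
    fun β hβ heq => W_le_rpow hp hq hpq hβ.1.le heq⟩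
end

section
/- The equation 1/p^α + 1/q^α − 1/(pq)^α = 1/2 has a unique positive real solution α; moreover this solution satisfies α > 1 if min(p,q) = 2, α = 1 if {p,q} = {3,4}, and α < 1 in all other cases. -/
open Real

private lemma g_cont (P : ℝ) (hP : 0 < P) :
    Continuous fun α : ℝ => (1 : ℝ) - 1 / P ^ α := by
  have h : Continuous fun α : ℝ => P ^ α :=
    continuous_iff_continuousAt.2 fun b => Real.continuousAt_const_rpow hP.ne'
  exact continuous_const.sub (continuous_const.div h
    (fun x => (Real.rpow_pos_of_pos hP x).ne'))

private lemma key_eq (P Q : ℝ) (hP : 0 < P) (hQ : 0 < Q) (α : ℝ) :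
    1 / P ^ α + 1 / Q ^ α - 1 / (P * Q) ^ α
      = 1 - (1 - 1 / P ^ α) * (1 - 1 / Q ^ α) := by
  rw [Real.mul_rpow hP.le hQ.le]
  have h1 : P ^ α ≠ 0 := (Real.rpow_pos_of_pos hP α).ne'
  have h2 : Q ^ α ≠ 0 := (Real.rpow_pos_of_pos hQ α).ne'
  field_simp
  ring

private lemma factor_lt (P : ℝ) (hP : 1 < P) {a b : ℝ} (hab : a < b) :
    1 - 1 / P ^ a < 1 - 1 / P ^ b := by
  have h1 : P ^ a < P ^ b := (Real.rpow_lt_rpow_left_iff hP).2 hab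
  have ha : (0:ℝ) < P ^ a := Real.rpow_pos_of_pos (by linarith) a
  have := one_div_lt_one_div_of_lt ha h1
  linarith

private lemma factor_pos (P : ℝ) (hP : 1 < P) {a : ℝ} (ha : 0 < a) :
    0 < 1 - 1 / P ^ a := by
  have h1 : 1 < P ^ a :=
    (Real.one_lt_rpow_iff_of_pos (by linarith)).2 (Or.inl ⟨hP, ha⟩)
  have : 1 / P ^ a < 1 := by
    rw [div_lt_one (by linarith)]; exact h1
  linarith

private lemma g_smon (P Q : ℝ) (hP : 1 < P) (hQ : 1 < Q) :
    StrictMonoOn (fun α : ℝ => (1 - 1 / P ^ α) * (1 - 1 / Q ^ α)) (Set.Ioi 0) := by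
  intro a ha b hb hab
  exact mul_lt_mul'' (factor_lt P hP hab) (factor_lt Q hQ hab)
    (factor_pos P hP ha).le (factor_pos Q hQ ha).le

set_option maxHeartbeats 1000000 in
theorem alpha_exists_unique (p q : ℕ) (hp : 1 < p) (hq : 1 < q)
    (hpq : Nat.Coprime p q) :
    (∃! α : ℝ, 0 < α ∧
      1 / (p : ℝ) ^ α + 1 / (q : ℝ) ^ α - 1 / ((p : ℝ) * (q : ℝ)) ^ α = 1 / 2) ∧
    ∀ α : ℝ, 0 < α →
      1 / (p : ℝ) ^ α + 1 / (q : ℝ) ^ α - 1 / ((p : ℝ) * (q : ℝ)) ^ α = 1 / 2 →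
      ((min p q = 2 → 1 < α) ∧
       ((p = 3 ∧ q = 4) ∨ (p = 4 ∧ q = 3) → α = 1) ∧
       (min p q ≠ 2 → ¬((p = 3 ∧ q = 4) ∨ (p = 4 ∧ q = 3)) → α < 1)) := by
  have hP : (1:ℝ) < p := by exact_mod_cast hp
  have hQ : (1:ℝ) < q := by exact_mod_cast hq
  have hP0 : (0:ℝ) < p := by linarith
  have hQ0 : (0:ℝ) < q := by linarith
  set g : ℝ → ℝ := fun α => (1 - 1 / (p:ℝ) ^ α) * (1 - 1 / (q:ℝ) ^ α) with hg
  have hgval : ∀ α : ℝ, g α = (1 - 1 / (p:ℝ) ^ α) * (1 - 1 / (q:ℝ) ^ α) :=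
    fun _ => rfl
  have hiff : ∀ α : ℝ,
      (1 / (p : ℝ) ^ α + 1 / (q : ℝ) ^ α - 1 / ((p : ℝ) * (q : ℝ)) ^ α = 1 / 2)
        ↔ g α = 1 / 2 := by
    intro α
    rw [key_eq _ _ hP0 hQ0 α, hgval α]
    constructor <;> intro h <;> linarith
  have hsm : StrictMonoOn g (Set.Ioi 0) := g_smon (p:ℝ) (q:ℝ) hP hQ
  -- existence via IVT
  set ε : ℝ := 1 / ((p:ℝ) * q) with hε
  have hε0 : 0 < ε := by positivity
  have hε2 : ε ≤ 2 := by
    rw [hε, div_le_iff₀ (by positivity)]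
    nlinarith
  have hgε : g ε < 1 / 2 := by
    have hlog2 : (0.6931471803 : ℝ) < Real.log 2 := Real.log_two_gt_d9
    have hq2 : (2:ℝ) ≤ q := by exact_mod_cast hq
    have hpε : (p:ℝ) ^ ε < 2 := by
      rw [Real.rpow_lt_iff_lt_log hP0 (by norm_num)]
      have h1 : Real.log p < p :=
        lt_trans (Real.log_lt_sub_one_of_pos hP0 (by linarith)) (by linarith)
      have h2' : (1:ℝ) ≤ (q:ℝ) * Real.log 2 := by nlinarith
      have h2 : (p:ℝ) ≤ (p:ℝ) * (q:ℝ) * Real.log 2 := by nlinarith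
      have h3 : ε * Real.log p < ε * ((p:ℝ) * (q:ℝ) * Real.log 2) :=
        mul_lt_mul_of_pos_left (by linarith) hε0
      have h4 : ε * ((p:ℝ) * (q:ℝ) * Real.log 2) = Real.log 2 := by
        rw [hε]; field_simp
      linarith
    have hpp : (0:ℝ) < (p:ℝ) ^ ε := Real.rpow_pos_of_pos hP0 ε
    have hx : 1 - 1 / (p:ℝ) ^ ε < 1 / 2 := by
      have : 1 / 2 < 1 / (p:ℝ) ^ ε := one_div_lt_one_div_of_lt hpp hpε
      linarith
    have hy : 1 - 1 / (q:ℝ) ^ ε < 1 := by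
      have : (0:ℝ) < 1 / (q:ℝ) ^ ε := by positivity
      linarith
    have hx0 := factor_pos (p:ℝ) hP hε0
    have hy0 := factor_pos (q:ℝ) hQ hε0
    calc g ε = (1 - 1 / (p:ℝ) ^ ε) * (1 - 1 / (q:ℝ) ^ ε) := hgval ε
      _ ≤ (1 - 1 / (p:ℝ) ^ ε) * 1 := mul_le_mul_of_nonneg_left hy.le hx0.le
      _ < 1 / 2 := by rw [mul_one]; exact hx
  have hg2 : 1 / 2 < g 2 := by
    have hp2 : (4:ℝ) ≤ (p:ℝ) ^ (2:ℝ) := by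
      rw [show ((2:ℝ)) = ((2:ℕ):ℝ) by norm_num, Real.rpow_natCast]
      have : (2:ℝ) ≤ p := by exact_mod_cast hp
      nlinarith
    have hq2 : (4:ℝ) ≤ (q:ℝ) ^ (2:ℝ) := by
      rw [show ((2:ℝ)) = ((2:ℕ):ℝ) by norm_num, Real.rpow_natCast]
      have : (2:ℝ) ≤ q := by exact_mod_cast hq
      nlinarith
    have hx : (3/4:ℝ) ≤ 1 - 1 / (p:ℝ) ^ (2:ℝ) := by
      have : 1 / (p:ℝ) ^ (2:ℝ) ≤ 1 / 4 := one_div_le_one_div_of_le (by norm_num) hp2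
      linarith
    have hy : (3/4:ℝ) ≤ 1 - 1 / (q:ℝ) ^ (2:ℝ) := by
      have : 1 / (q:ℝ) ^ (2:ℝ) ≤ 1 / 4 := one_div_le_one_div_of_le (by norm_num) hq2
      linarith
    have h916 : (9/16:ℝ) ≤ g 2 := by
      rw [hgval 2]; nlinarith
    linarith
  have hcont : ContinuousOn g (Set.Icc ε 2) :=
    ((g_cont (p:ℝ) hP0).mul (g_cont (q:ℝ) hQ0)).continuousOn
  have hmem : (1/2 : ℝ) ∈ Set.Icc (g ε) (g 2) := ⟨hgε.le, hg2.le⟩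
  obtain ⟨α, hαmem, hαeq⟩ := intermediate_value_Icc hε2 hcont hmem
  have hα0 : 0 < α := lt_of_lt_of_le hε0 hαmem.1
  -- value of g at 1 and its comparison machinery
  have hg1 : g 1 = (1 - 1/(p:ℝ)) * (1 - 1/(q:ℝ)) := by
    rw [hgval 1, Real.rpow_one, Real.rpow_one]
  have hdiff : g 1 - 1/2 = (2*((p:ℝ)-1)*((q:ℝ)-1) - (p:ℝ)*(q:ℝ)) / (2*(p:ℝ)*(q:ℝ)) := by
    rw [hg1]; field_simp
  constructor
  · refine ⟨α, ⟨hα0, (hiff α).2 hαeq⟩, ?_⟩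
    rintro β ⟨hβ0, hβeq⟩
    exact hsm.injOn (Set.mem_Ioi.2 hβ0) (Set.mem_Ioi.2 hα0)
      (((hiff β).1 hβeq).trans hαeq.symm)
  · intro β hβ0 hβeq
    have hgβ : g β = 1 / 2 := (hiff β).1 hβeq
    refine ⟨?_, ?_, ?_⟩
    · intro hmin
      have hcase : p = 2 ∨ q = 2 := by omega
      have hnum : 2*((p:ℝ)-1)*((q:ℝ)-1) - (p:ℝ)*(q:ℝ) < 0 := by
        rcases hcase with h | h
        · have hp2 : (p:ℝ) = 2 := by rw [h]; norm_num
          rw [hp2]; linarith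
        · have hq2 : (q:ℝ) = 2 := by rw [h]; norm_num
          rw [hq2]; linarith
      have hlt : g 1 < 1/2 := by
        have := div_neg_of_neg_of_pos hnum (by positivity : (0:ℝ) < 2*(p:ℝ)*(q:ℝ))
        linarith
      by_contra h
      push_neg at h
      rcases eq_or_lt_of_le h with h | h
      · subst h; linarith
      · have := hsm (Set.mem_Ioi.2 hβ0) (Set.mem_Ioi.2 one_pos) h
        rw [hgβ] at this
        exact absurd this (by linarith)
    · intro hcase
      have hg1' : g 1 = 1/2 := by
        rcases hcase with ⟨h1, h2⟩ | ⟨h1, h2⟩ <;>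
          · rw [hg1, h1, h2]; norm_num
      exact hsm.injOn (Set.mem_Ioi.2 hβ0) (Set.mem_Ioi.2 one_pos)
        (hgβ.trans hg1'.symm)
    · intro hmin hnot
      have hp3 : 3 ≤ p := by omega
      have hq3 : 3 ≤ q := by omega
      have hne33 : ¬(p = 3 ∧ q = 3) := by
        rintro ⟨h1, h2⟩
        rw [h1, h2] at hpq
        simp [Nat.Coprime] at hpq
      have hnat : p * q < 2 * (p - 1) * (q - 1) := by
        rcases Nat.lt_or_ge p 5 with h5 | h5
        · interval_cases p
          · -- p = 3
            have hq5 : 5 ≤ q := by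
              rcases Nat.lt_or_ge q 5 with h | h
              · interval_cases q
                · exact absurd ⟨rfl, rfl⟩ hne33
                · exact absurd (Or.inl ⟨rfl, rfl⟩) hnot
              · exact h
            omega
          · -- p = 4
            have hq4 : 4 ≤ q := by
              rcases Nat.lt_or_ge q 4 with h | h
              · interval_cases q
                · exact absurd (Or.inr ⟨rfl, rfl⟩) hnot
              · exact h
            omega
        · have hp' : (5:ℤ) ≤ p := by exact_mod_cast h5
          have hq' : (3:ℤ) ≤ q := by exact_mod_cast hq3
          zify [show 1 ≤ p from by omega, show 1 ≤ q from by omega]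
          nlinarith [mul_le_mul (by linarith : (3:ℤ) ≤ (p:ℤ)-2)
            (by linarith : (1:ℤ) ≤ (q:ℤ)-2) (by linarith) (by linarith)]
      have hnum : (0:ℝ) < 2*((p:ℝ)-1)*((q:ℝ)-1) - (p:ℝ)*(q:ℝ) := by
        have h1 : ((p * q : ℕ) : ℝ) < ((2 * (p - 1) * (q - 1) : ℕ) : ℝ) := by
          exact_mod_cast hnat
        push_cast [Nat.cast_sub (by omega : 1 ≤ p), Nat.cast_sub (by omega : 1 ≤ q)] at h1
        linarith
      have hgt : 1/2 < g 1 := by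
        have := div_pos hnum (by positivity : (0:ℝ) < 2*(p:ℝ)*(q:ℝ))
        linarith
      by_contra h
      push_neg at h
      rcases eq_or_lt_of_le h with h | h
      · rw [← h] at hgβ
        linarith
      · have := hsm (Set.mem_Ioi.2 one_pos) (Set.mem_Ioi.2 hβ0) h
        rw [hgβ] at this
        exact absurd this (by linarith)
end
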